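/- Let R be an algebraic curvature tensor on ℝⁿ (n ≥ 4) with two-nonnegative curvature operator (the sum of the two smallest eigenvalues of the curvature operator on Λ²ℝⁿ is nonnegative). Then R has nonnegative isotropic curvature. -/
import Mathlib


/-- The (0,4)-curvature tensor applied to four vectors of ℝⁿ. -/
def applyR (n : ℕ) (R : Fin n → Fin n → Fin n → Fin n → ℝ)
    (x y z w : Fin n → ℝ) : ℝ :=
  ∑ i, ∑ j, ∑ k, ∑ l, R i j k l * x i * y j * z k * w l

/-- The curvature operator acting on a 2-form ω: (ℛω)_{ij} = ½ Σ_{kl} R_{ijkl} ω_{kl}. -/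
noncomputable def curvOp (n : ℕ) (R : Fin n → Fin n → Fin n → Fin n → ℝ)
    (ω : Fin n → Fin n → ℝ) : Fin n → Fin n → ℝ :=
  fun i j => (1 / 2) * ∑ k, ∑ l, R i j k l * ω k l

/-- The inner product on 2-forms: ⟨ω,η⟩ = ½ Σ ω_{ij} η_{ij}. -/
noncomputable def form2Inner (n : ℕ) (ω η : Fin n → Fin n → ℝ) : ℝ :=
  (1 / 2) * ∑ i, ∑ j, ω i j * η i j

/-- The wedge (exterior product) of two vectors, as a 2-form. -/
def wedge (n : ℕ) (x y : Fin n → ℝ) : Fin n → Fin n → ℝ :=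
  fun i j => x i * y j - x j * y i

section Helpers

lemma sum4_swap12 (n : ℕ) (f : Fin n → Fin n → Fin n → Fin n → ℝ) :
    (∑ i, ∑ j, ∑ k, ∑ l, f i j k l) = ∑ i, ∑ j, ∑ k, ∑ l, f j i k l :=
  Finset.sum_comm

lemma sum4_swap23 (n : ℕ) (f : Fin n → Fin n → Fin n → Fin n → ℝ) :
    (∑ i, ∑ j, ∑ k, ∑ l, f i j k l) = ∑ i, ∑ j, ∑ k, ∑ l, f i k j l :=
  Finset.sum_congr rfl fun _ _ => Finset.sum_comm

lemma sum4_swap34 (n : ℕ) (f : Fin n → Fin n → Fin n → Fin n → ℝ) :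
    (∑ i, ∑ j, ∑ k, ∑ l, f i j k l) = ∑ i, ∑ j, ∑ k, ∑ l, f i j l k :=
  Finset.sum_congr rfl fun _ _ => Finset.sum_congr rfl fun _ _ => Finset.sum_comm

lemma sum4_congr (n : ℕ) (f g : Fin n → Fin n → Fin n → Fin n → ℝ)
    (h : ∀ i j k l, f i j k l = g i j k l) :
    (∑ i, ∑ j, ∑ k, ∑ l, f i j k l) = ∑ i, ∑ j, ∑ k, ∑ l, g i j k l :=
  Finset.sum_congr rfl fun i _ => Finset.sum_congr rfl fun j _ =>
    Finset.sum_congr rfl fun k _ => Finset.sum_congr rfl fun l _ => h i j k l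

lemma sum4_perm_jkil (n : ℕ) (f : Fin n → Fin n → Fin n → Fin n → ℝ) :
    (∑ i, ∑ j, ∑ k, ∑ l, f i j k l) = ∑ i, ∑ j, ∑ k, ∑ l, f j k i l := by
  calc (∑ i, ∑ j, ∑ k, ∑ l, f i j k l)
      = ∑ i, ∑ j, ∑ k, ∑ l, f i k j l := sum4_swap23 n f
    _ = ∑ i, ∑ j, ∑ k, ∑ l, f j k i l := sum4_swap12 n (fun i j k l => f i k j l)

lemma sum4_perm_kijl (n : ℕ) (f : Fin n → Fin n → Fin n → Fin n → ℝ) :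
    (∑ i, ∑ j, ∑ k, ∑ l, f i j k l) = ∑ i, ∑ j, ∑ k, ∑ l, f k i j l := by
  calc (∑ i, ∑ j, ∑ k, ∑ l, f i j k l)
      = ∑ i, ∑ j, ∑ k, ∑ l, f j i k l := sum4_swap12 n f
    _ = ∑ i, ∑ j, ∑ k, ∑ l, f k i j l := sum4_swap23 n (fun i j k l => f j i k l)

lemma sum4_perm_klij (n : ℕ) (f : Fin n → Fin n → Fin n → Fin n → ℝ) :
    (∑ i, ∑ j, ∑ k, ∑ l, f i j k l) = ∑ i, ∑ j, ∑ k, ∑ l, f k l i j := by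
  calc (∑ i, ∑ j, ∑ k, ∑ l, f i j k l)
      = ∑ i, ∑ j, ∑ k, ∑ l, f j k i l := sum4_perm_jkil n f
    _ = ∑ i, ∑ j, ∑ k, ∑ l, f j l i k := sum4_swap34 n (fun i j k l => f j k i l)
    _ = ∑ i, ∑ j, ∑ k, ∑ l, f k l i j := sum4_swap23 n (fun i j k l => f j l i k)

lemma sum4_neg (n : ℕ) (f : Fin n → Fin n → Fin n → Fin n → ℝ) :
    (∑ i, ∑ j, ∑ k, ∑ l, - f i j k l) = - ∑ i, ∑ j, ∑ k, ∑ l, f i j k l := by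
  simp

lemma sum4_add (n : ℕ) (f g : Fin n → Fin n → Fin n → Fin n → ℝ) :
    (∑ i, ∑ j, ∑ k, ∑ l, (f i j k l + g i j k l))
      = (∑ i, ∑ j, ∑ k, ∑ l, f i j k l) + ∑ i, ∑ j, ∑ k, ∑ l, g i j k l := by
  simp [Finset.sum_add_distrib]

lemma sum2_congr (n : ℕ) (f g : Fin n → Fin n → ℝ) (h : ∀ i j, f i j = g i j) :
    (∑ i, ∑ j, f i j) = ∑ i, ∑ j, g i j :=
  Finset.sum_congr rfl fun i _ => Finset.sum_congr rfl fun j _ => h i j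

lemma sum2_add (n : ℕ) (f g : Fin n → Fin n → ℝ) :
    (∑ i, ∑ j, (f i j + g i j)) = (∑ i, ∑ j, f i j) + ∑ i, ∑ j, g i j := by
  simp [Finset.sum_add_distrib]

lemma sum2_sub (n : ℕ) (f g : Fin n → Fin n → ℝ) :
    (∑ i, ∑ j, (f i j - g i j)) = (∑ i, ∑ j, f i j) - ∑ i, ∑ j, g i j := by
  simp [Finset.sum_sub_distrib]

lemma sum2_neg (n : ℕ) (f : Fin n → Fin n → ℝ) :
    (∑ i, ∑ j, - f i j) = - ∑ i, ∑ j, f i j := by simp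

lemma sum2_smul (n : ℕ) (c : ℝ) (f : Fin n → Fin n → ℝ) :
    (∑ i, ∑ j, c * f i j) = c * ∑ i, ∑ j, f i j := by
  simp [Finset.mul_sum]

end Helpers

section SymmetryLemmas

lemma applyR_anti1 (n : ℕ) (R : Fin n → Fin n → Fin n → Fin n → ℝ)
    (h : ∀ i j k l, R i j k l = - R j i k l) (x y z u : Fin n → ℝ) :
    applyR n R y x z u = - applyR n R x y z u := by
  unfold applyR
  rw [sum4_swap12 n (fun i j k l => R i j k l * y i * x j * z k * u l)]
  rw [← sum4_neg n (fun i j k l => R i j k l * x i * y j * z k * u l)]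
  exact sum4_congr n _ _ fun i j k l => by rw [h j i k l]; ring

lemma applyR_pair (n : ℕ) (R : Fin n → Fin n → Fin n → Fin n → ℝ)
    (h : ∀ i j k l, R i j k l = R k l i j) (x y z u : Fin n → ℝ) :
    applyR n R z u x y = applyR n R x y z u := by
  unfold applyR
  rw [sum4_perm_klij n (fun i j k l => R i j k l * z i * u j * x k * y l)]
  exact sum4_congr n _ _ fun i j k l => by rw [h k l i j]; ring

lemma applyR_bianchi (n : ℕ) (R : Fin n → Fin n → Fin n → Fin n → ℝ)
    (h : ∀ i j k l, R i j k l + R j k i l + R k i j l = 0) (x y z u : Fin n → ℝ) :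
    applyR n R x y z u + applyR n R y z x u + applyR n R z x y u = 0 := by
  unfold applyR
  rw [sum4_perm_jkil n (fun i j k l => R i j k l * y i * z j * x k * u l)]
  rw [sum4_perm_kijl n (fun i j k l => R i j k l * z i * x j * y k * u l)]
  rw [← sum4_add n _ _, ← sum4_add n _ _]
  rw [show (0:ℝ) = ∑ i : Fin n, ∑ j : Fin n, ∑ k : Fin n, ∑ l : Fin n, (0:ℝ) by simp]
  exact sum4_congr n _ _ fun i j k l => by
    linear_combination (x i * y j * z k * u l) * h i j k l

end SymmetryLemmas

section WedgeLemmas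

lemma contract_anti (n : ℕ) (A : Fin n → Fin n → ℝ) (hA : ∀ k l, A k l = - A l k)
    (z u : Fin n → ℝ) :
    (∑ k, ∑ l, A k l * (z k * u l - z l * u k)) = 2 * ∑ k, ∑ l, A k l * (z k * u l) := by
  have h2 : (∑ k, ∑ l, A k l * (z l * u k)) = - ∑ k, ∑ l, A k l * (z k * u l) := by
    rw [show (∑ k, ∑ l, A k l * (z l * u k)) = ∑ k, ∑ l, A l k * (z k * u l) from
      Finset.sum_comm]
    rw [show (∑ k : Fin n, ∑ l : Fin n, A l k * (z k * u l))
        = ∑ k : Fin n, ∑ l : Fin n, -(A k l * (z k * u l)) from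
      sum2_congr n _ _ fun k l => by rw [hA l k]; ring]
    exact sum2_neg n _
  calc (∑ k, ∑ l, A k l * (z k * u l - z l * u k))
      = ∑ k, ∑ l, (A k l * (z k * u l) - A k l * (z l * u k)) :=
        sum2_congr n _ _ fun k l => by ring
    _ = (∑ k, ∑ l, A k l * (z k * u l)) - ∑ k, ∑ l, A k l * (z l * u k) := sum2_sub n _ _
    _ = 2 * ∑ k, ∑ l, A k l * (z k * u l) := by rw [h2]; ring

lemma inner_wedge (n : ℕ) (x y z u : Fin n → ℝ) :
    form2Inner n (wedge n x y) (wedge n z u)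
      = (∑ i, x i * z i) * (∑ i, y i * u i) - (∑ i, x i * u i) * (∑ i, y i * z i) := by
  unfold form2Inner wedge
  have key : ∀ i, (∑ j, (x i * y j - x j * y i) * (z i * u j - z j * u i))
      = x i * z i * (∑ j, y j * u j) - x i * u i * (∑ j, y j * z j)
        - y i * z i * (∑ j, x j * u j) + y i * u i * (∑ j, x j * z j) := by
    intro i
    simp only [Finset.mul_sum, ← Finset.sum_add_distrib, ← Finset.sum_sub_distrib]
    exact Finset.sum_congr rfl fun j _ => by ring
  rw [Finset.sum_congr rfl fun i _ => key i]
  simp only [Finset.sum_add_distrib, Finset.sum_sub_distrib, ← Finset.sum_mul]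
  ring

lemma op_wedge (n : ℕ) (R : Fin n → Fin n → Fin n → Fin n → ℝ)
    (h1 : ∀ i j k l, R i j k l = - R j i k l)
    (h2 : ∀ i j k l, R i j k l = - R i j l k)
    (x y z u : Fin n → ℝ) :
    form2Inner n (curvOp n R (wedge n z u)) (wedge n x y) = applyR n R x y z u := by
  have hB : ∀ i j, curvOp n R (wedge n z u) i j
      = ∑ k, ∑ l, R i j k l * (z k * u l) := by
    intro i j
    show (1/2) * (∑ k, ∑ l, R i j k l * (z k * u l - z l * u k)) = _
    rw [contract_anti n (R i j) (h2 i j) z u]; ring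
  have hBanti : ∀ i j, (∑ k, ∑ l, R i j k l * (z k * u l))
      = - ∑ k, ∑ l, R j i k l * (z k * u l) := by
    intro i j
    rw [← sum2_neg n (fun k l => R j i k l * (z k * u l))]
    exact sum2_congr n _ _ fun k l => by rw [h1 i j k l]; ring
  have step1 : form2Inner n (curvOp n R (wedge n z u)) (wedge n x y)
      = (1/2) * ∑ i, ∑ j,
          (∑ k, ∑ l, R i j k l * (z k * u l)) * (x i * y j - x j * y i) := by
    unfold form2Inner
    congr 1
    exact sum2_congr n _ _ fun i j => by rw [hB i j]; rfl
  rw [step1]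
  rw [contract_anti n (fun i j => ∑ k, ∑ l, R i j k l * (z k * u l)) hBanti x y]
  have step2 : (∑ i, ∑ j, (∑ k, ∑ l, R i j k l * (z k * u l)) * (x i * y j))
      = applyR n R x y z u := by
    unfold applyR
    refine sum2_congr n _ _ fun i j => ?_
    rw [Finset.sum_mul]
    refine Finset.sum_congr rfl fun k _ => ?_
    rw [Finset.sum_mul]
    exact Finset.sum_congr rfl fun l _ => by ring
  rw [step2]; ring

end WedgeLemmas

section Bilinearity

lemma curvOp_comb (n : ℕ) (R : Fin n → Fin n → Fin n → Fin n → ℝ) (a b : ℝ)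
    (A B : Fin n → Fin n → ℝ) :
    curvOp n R (fun i j => a * A i j + b * B i j)
      = fun i j => a * curvOp n R A i j + b * curvOp n R B i j := by
  funext i j
  unfold curvOp
  rw [sum2_congr n _ _ (fun k l =>
    show R i j k l * (a * A k l + b * B k l)
      = a * (R i j k l * A k l) + b * (R i j k l * B k l) by ring)]
  rw [sum2_add, sum2_smul, sum2_smul]
  ring

lemma form2Inner_comb_left (n : ℕ) (a b : ℝ) (A B C : Fin n → Fin n → ℝ) :
    form2Inner n (fun i j => a * A i j + b * B i j) C
      = a * form2Inner n A C + b * form2Inner n B C := by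
  unfold form2Inner
  rw [sum2_congr n _ _ (fun i j =>
    show (a * A i j + b * B i j) * C i j
      = a * (A i j * C i j) + b * (B i j * C i j) by ring)]
  rw [sum2_add, sum2_smul, sum2_smul]
  ring

lemma form2Inner_comb_right (n : ℕ) (a b : ℝ) (A B C : Fin n → Fin n → ℝ) :
    form2Inner n C (fun i j => a * A i j + b * B i j)
      = a * form2Inner n C A + b * form2Inner n C B := by
  unfold form2Inner
  rw [sum2_congr n _ _ (fun i j =>
    show C i j * (a * A i j + b * B i j)
      = a * (C i j * A i j) + b * (C i j * B i j) by ring)]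
  rw [sum2_add, sum2_smul, sum2_smul]
  ring

lemma inner_comb (n : ℕ) (a b c d : ℝ) (x1 y1 x2 y2 x3 y3 x4 y4 : Fin n → ℝ) :
    form2Inner n (fun i j => a * wedge n x1 y1 i j + b * wedge n x2 y2 i j)
      (fun i j => c * wedge n x3 y3 i j + d * wedge n x4 y4 i j)
    = a * (c * form2Inner n (wedge n x1 y1) (wedge n x3 y3)
          + d * form2Inner n (wedge n x1 y1) (wedge n x4 y4))
      + b * (c * form2Inner n (wedge n x2 y2) (wedge n x3 y3)
          + d * form2Inner n (wedge n x2 y2) (wedge n x4 y4)) := by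
  rw [form2Inner_comb_left, form2Inner_comb_right, form2Inner_comb_right]

lemma quad_comb (n : ℕ) (R : Fin n → Fin n → Fin n → Fin n → ℝ)
    (h1 : ∀ i j k l, R i j k l = - R j i k l)
    (h2 : ∀ i j k l, R i j k l = - R i j l k)
    (a b : ℝ) (x1 y1 x2 y2 : Fin n → ℝ) :
    form2Inner n (curvOp n R (fun i j => a * wedge n x1 y1 i j + b * wedge n x2 y2 i j))
        (fun i j => a * wedge n x1 y1 i j + b * wedge n x2 y2 i j)
      = a * a * applyR n R x1 y1 x1 y1 + a * b * applyR n R x2 y2 x1 y1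
        + a * b * applyR n R x1 y1 x2 y2 + b * b * applyR n R x2 y2 x2 y2 := by
  rw [curvOp_comb n R a b (wedge n x1 y1) (wedge n x2 y2)]
  rw [form2Inner_comb_left, form2Inner_comb_right, form2Inner_comb_right]
  rw [op_wedge n R h1 h2 x1 y1 x1 y1, op_wedge n R h1 h2 x2 y2 x1 y1,
      op_wedge n R h1 h2 x1 y1 x2 y2, op_wedge n R h1 h2 x2 y2 x2 y2]
  ring

end Bilinearity

/-- An algebraic curvature tensor with two-nonnegative curvature operator (the sum of the
quadratic form of the curvature operator over any orthonormal pair of 2-forms is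
nonnegative, equivalently λ₁ + λ₂ ≥ 0) has nonnegative isotropic curvature. -/
theorem stmt_16 (n : ℕ) (hn : 4 ≤ n) (R : Fin n → Fin n → Fin n → Fin n → ℝ)
    (hanti1 : ∀ i j k l, R i j k l = - R j i k l)
    (hanti2 : ∀ i j k l, R i j k l = - R i j l k)
    (hpair : ∀ i j k l, R i j k l = R k l i j)
    (hbianchi : ∀ i j k l, R i j k l + R j k i l + R k i j l = 0)
    (h2nonneg : ∀ ω η : Fin n → Fin n → ℝ,
      (∀ i j, ω i j = - ω j i) → (∀ i j, η i j = - η j i) →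
      form2Inner n ω ω = 1 → form2Inner n η η = 1 → form2Inner n ω η = 0 →
      0 ≤ form2Inner n (curvOp n R ω) ω + form2Inner n (curvOp n R η) η) :
    ∀ e : Fin 4 → (Fin n → ℝ),
      (∀ a b : Fin 4, (∑ i, e a i * e b i) = if a = b then 1 else 0) →
      0 ≤ applyR n R (e 0) (e 2) (e 0) (e 2) + applyR n R (e 0) (e 3) (e 0) (e 3)
        + applyR n R (e 1) (e 2) (e 1) (e 2) + applyR n R (e 1) (e 3) (e 1) (e 3)
        - 2 * applyR n R (e 0) (e 1) (e 2) (e 3) := by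
  intro e h
  set s : ℝ := (Real.sqrt 2)⁻¹ with hs_def
  have hs : s * s = 1 / 2 := by
    rw [hs_def, ← mul_inv, Real.mul_self_sqrt (by norm_num : (2:ℝ) ≥ 0)]
    norm_num
  -- the two isotropic 2-forms
  have hωanti : ∀ i j,
      (s * wedge n (e 0) (e 2) i j + (-s) * wedge n (e 1) (e 3) i j)
        = -(s * wedge n (e 0) (e 2) j i + (-s) * wedge n (e 1) (e 3) j i) := by
    intro i j; unfold wedge; ring
  have hηanti : ∀ i j,
      (s * wedge n (e 0) (e 3) i j + s * wedge n (e 1) (e 2) i j)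
        = -(s * wedge n (e 0) (e 3) j i + s * wedge n (e 1) (e 2) j i) := by
    intro i j; unfold wedge; ring
  have hω1 : form2Inner n
      (fun i j => s * wedge n (e 0) (e 2) i j + (-s) * wedge n (e 1) (e 3) i j)
      (fun i j => s * wedge n (e 0) (e 2) i j + (-s) * wedge n (e 1) (e 3) i j) = 1 := by
    rw [inner_comb]
    simp only [inner_wedge, h, Fin.reduceEq, reduceIte]
    norm_num
    linear_combination 2 * hs
  have hη1 : form2Inner n
      (fun i j => s * wedge n (e 0) (e 3) i j + s * wedge n (e 1) (e 2) i j)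
      (fun i j => s * wedge n (e 0) (e 3) i j + s * wedge n (e 1) (e 2) i j) = 1 := by
    rw [inner_comb]
    simp only [inner_wedge, h, Fin.reduceEq, reduceIte]
    norm_num
    linear_combination 2 * hs
  have hωη : form2Inner n
      (fun i j => s * wedge n (e 0) (e 2) i j + (-s) * wedge n (e 1) (e 3) i j)
      (fun i j => s * wedge n (e 0) (e 3) i j + s * wedge n (e 1) (e 2) i j) = 0 := by
    rw [inner_comb]
    simp only [inner_wedge, h, Fin.reduceEq, reduceIte]
    norm_num
  have key := h2nonneg
    (fun i j => s * wedge n (e 0) (e 2) i j + (-s) * wedge n (e 1) (e 3) i j)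
    (fun i j => s * wedge n (e 0) (e 3) i j + s * wedge n (e 1) (e 2) i j)
    hωanti hηanti hω1 hη1 hωη
  rw [quad_comb n R hanti1 hanti2 s (-s) (e 0) (e 2) (e 1) (e 3),
      quad_comb n R hanti1 hanti2 s s (e 0) (e 3) (e 1) (e 2)] at key
  have hp1 : applyR n R (e 1) (e 3) (e 0) (e 2) = applyR n R (e 0) (e 2) (e 1) (e 3) :=
    applyR_pair n R hpair (e 0) (e 2) (e 1) (e 3)
  have hp2 : applyR n R (e 1) (e 2) (e 0) (e 3) = applyR n R (e 0) (e 3) (e 1) (e 2) :=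
    applyR_pair n R hpair (e 0) (e 3) (e 1) (e 2)
  have hb : applyR n R (e 1) (e 2) (e 0) (e 3) + applyR n R (e 2) (e 0) (e 1) (e 3)
      + applyR n R (e 0) (e 1) (e 2) (e 3) = 0 :=
    applyR_bianchi n R hbianchi (e 1) (e 2) (e 0) (e 3)
  have ha : applyR n R (e 2) (e 0) (e 1) (e 3) = - applyR n R (e 0) (e 2) (e 1) (e 3) :=
    applyR_anti1 n R hanti1 (e 0) (e 2) (e 1) (e 3)
  have key2 : 0 ≤ (1/2) * (applyR n R (e 0) (e 2) (e 0) (e 2)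
      + applyR n R (e 1) (e 3) (e 1) (e 3))
      - (1/2) * (applyR n R (e 1) (e 3) (e 0) (e 2) + applyR n R (e 0) (e 2) (e 1) (e 3))
      + (1/2) * (applyR n R (e 0) (e 3) (e 0) (e 3)
      + applyR n R (e 1) (e 2) (e 1) (e 2))
      + (1/2) * (applyR n R (e 1) (e 2) (e 0) (e 3)
      + applyR n R (e 0) (e 3) (e 1) (e 2)) := by
    refine le_of_le_of_eq key ?_
    linear_combination (applyR n R (e 0) (e 2) (e 0) (e 2)
      + applyR n R (e 1) (e 3) (e 1) (e 3)
      - applyR n R (e 1) (e 3) (e 0) (e 2) - applyR n R (e 0) (e 2) (e 1) (e 3)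
      + applyR n R (e 0) (e 3) (e 0) (e 3) + applyR n R (e 1) (e 2) (e 1) (e 2)
      + applyR n R (e 1) (e 2) (e 0) (e 3) + applyR n R (e 0) (e 3) (e 1) (e 2)) * hs
  linarith [key2, hp1, hp2, hb, ha]
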